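/- arXiv:1304.6233 — 5 statements merged into one kernel-verified Lean document; each statement's English description precedes it below -/
import Mathlib

section
/- Let A = X Z be feasible, i.e., A lies in the column space of X. Then the minimum of rank(Z) over all Z satisfying A = X Z equals rank(A), and the set of minimizers is exactly { Z = X† A + S V_Aᵀ : S is any matrix with V_Xᵀ S = 0 }, where U_A Σ_A V_Aᵀ is the skinny SVD of A. -/
open Matrix

/-- The nuclear norm of a real matrix: the sum of its singular values,
i.e. the sum of the square roots of the eigenvalues of `Aᵀ * A`. -/
noncomputable def nuclearNorm {m n : Type*} [Fintype m] [Fintype n] [DecidableEq n]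
    (A : Matrix m n ℝ) : ℝ :=
  ∑ i, Real.sqrt ((show (Aᵀ * A).IsHermitian by
    simpa [Matrix.conjTranspose_eq_transpose_of_trivial] using
      Matrix.isHermitian_conjTranspose_mul_self A).eigenvalues i)

/-- `P` is the Moore–Penrose pseudo-inverse of `X`. -/
def IsMoorePenroseInv {m n : Type*} [Fintype m] [Fintype n]
    (X : Matrix m n ℝ) (P : Matrix n m ℝ) : Prop :=
  X * P * X = X ∧ P * X * P = P ∧ (X * P)ᵀ = X * P ∧ (P * X)ᵀ = P * X

/-- `(U, σ, V)` is a skinny SVD of `X`: `U` and `V` have orthonormal columns,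
`σ` lists the (positive) nonzero singular values, `X = U * diagonal σ * Vᵀ`,
and the number of columns of `U` and `V` is `rank X`. -/
def IsSkinnySVD {m n r : ℕ} (X : Matrix (Fin m) (Fin n) ℝ)
    (U : Matrix (Fin m) (Fin r) ℝ) (σ : Fin r → ℝ) (V : Matrix (Fin n) (Fin r) ℝ) : Prop :=
  Uᵀ * U = 1 ∧ Vᵀ * V = 1 ∧ (∀ i, 0 < σ i) ∧
    X = U * Matrix.diagonal σ * Vᵀ ∧ r = X.rank

/-! Every feasible `Z` has `rank A = rank (X Z) ≤ rank Z`. If equality holds, the row space of `Z`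
contains that of `A = X Z` and has the same dimension, so the two coincide; as the row space of `A`
is spanned by the columns of `V_A`, this gives `Z = Z V_A V_Aᵀ`, and `S = (Z - X† A) V_A` satisfies
`X S = 0`, i.e. `V_Xᵀ S = 0`. Conversely `X† A + S V_Aᵀ = (X† A V_A + S) V_Aᵀ` is feasible when
`V_Xᵀ S = 0` and has rank at most the number `rank A` of columns of `V_A`. -/

namespace Matrix

variable {K : Type*} [Field K] {l m n : Type*} [Fintype m] [Fintype n]

theorem range_mulVecLin_mul_le (M : Matrix l m K) (N : Matrix m n K) :
    LinearMap.range (M * N).mulVecLin ≤ LinearMap.range M.mulVecLin := by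
  rw [mulVecLin_mul]
  exact LinearMap.range_comp_le_range _ _

theorem rank_le_of_eq_mul {X : Matrix l m K} {Z : Matrix m n K} {A : Matrix l n K}
    (hA : A = X * Z) : A.rank ≤ Z.rank :=
  hA ▸ rank_mul_le_right X Z

theorem exists_mul_eq_of_range_mulVecLin_le [DecidableEq n] {M : Matrix l m K}
    {N : Matrix l n K} (h : LinearMap.range N.mulVecLin ≤ LinearMap.range M.mulVecLin) :
    ∃ Y : Matrix m n K, M * Y = N := by
  choose y hy using fun j => h (LinearMap.mem_range_self N.mulVecLin (Pi.single j 1))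
  refine ⟨(of y)ᵀ, ?_⟩
  ext i j
  simpa [mulVec, dotProduct, mul_apply, Pi.single_apply] using congrFun (hy j) i

theorem exists_eq_mul_of_eq_mul_of_rank_le [Fintype l] [DecidableEq m] {X : Matrix l m K}
    {Z : Matrix m n K} {A : Matrix l n K} (hA : A = X * Z) (hrank : Z.rank ≤ A.rank) :
    ∃ Y : Matrix m l K, Z = Y * A := by
  have hle : LinearMap.range Aᵀ.mulVecLin ≤ LinearMap.range Zᵀ.mulVecLin := by
    rw [hA, transpose_mul]
    exact range_mulVecLin_mul_le _ _
  have hrank' : Zᵀ.rank ≤ Aᵀ.rank := by rwa [rank_transpose, rank_transpose]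
  obtain ⟨W, hW⟩ :=
    exists_mul_eq_of_range_mulVecLin_le (Submodule.eq_of_le_of_finrank_le hle hrank').ge
  exact ⟨Wᵀ, by rw [← transpose_transpose Z, ← hW, transpose_mul, transpose_transpose]⟩

end Matrix

namespace IsSkinnySVD

variable {m n r : ℕ} {X : Matrix (Fin m) (Fin n) ℝ} {U : Matrix (Fin m) (Fin r) ℝ}
  {σ : Fin r → ℝ} {V : Matrix (Fin n) (Fin r) ℝ}

theorem transpose_right_eq (h : IsSkinnySVD X U σ V) : Vᵀ = diagonal σ⁻¹ * Uᵀ * X := by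
  obtain ⟨hU, -, hσ, hX, -⟩ := h
  have hσσ : σ⁻¹ * σ = 1 := funext fun i => inv_mul_cancel₀ (hσ i).ne'
  rw [hX, ← Matrix.mul_assoc, ← Matrix.mul_assoc, Matrix.mul_assoc _ Uᵀ, hU, Matrix.mul_one,
    diagonal_mul_diagonal, ← Pi.mul_def, hσσ, Pi.one_def, diagonal_one, Matrix.one_mul]

theorem mul_eq_zero_iff {k : Type*} (h : IsSkinnySVD X U σ V) (W : Matrix (Fin n) k ℝ) :
    X * W = 0 ↔ Vᵀ * W = 0 := by
  constructor
  · intro hW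
    rw [h.transpose_right_eq, Matrix.mul_assoc, hW, Matrix.mul_zero]
  · intro hW
    rw [h.2.2.2.1, Matrix.mul_assoc, hW, Matrix.mul_zero]

theorem mul_mul_transpose_right (h : IsSkinnySVD X U σ V) : X * (V * Vᵀ) = X := by
  conv_lhs => rw [h.2.2.2.1]
  rw [← Matrix.mul_assoc, Matrix.mul_assoc _ Vᵀ V, h.2.1, Matrix.mul_one, ← h.2.2.2.1]

theorem rank_mul_transpose_right_le {k : Type*} [Fintype k] (h : IsSkinnySVD X U σ V)
    (M : Matrix k (Fin r) ℝ) : (M * Vᵀ).rank ≤ X.rank :=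
  (rank_mul_le_left _ _).trans <| (rank_le_card_width M).trans_eq <| by
    rw [Fintype.card_fin, h.2.2.2.2]

end IsSkinnySVD

theorem eq_mul_and_rank_eq_iff {m n r rA : ℕ} {X A : Matrix (Fin m) (Fin n) ℝ}
    {P : Matrix (Fin n) (Fin m) ℝ} (hPA : X * (P * A) = A)
    {UX : Matrix (Fin m) (Fin r) ℝ} {σX : Fin r → ℝ} {VX : Matrix (Fin n) (Fin r) ℝ}
    (hXsvd : IsSkinnySVD X UX σX VX)
    {UA : Matrix (Fin m) (Fin rA) ℝ} {σA : Fin rA → ℝ} {VA : Matrix (Fin n) (Fin rA) ℝ}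
    (hAsvd : IsSkinnySVD A UA σA VA) (Z : Matrix (Fin n) (Fin n) ℝ) :
    (A = X * Z ∧ Z.rank = A.rank) ↔
      ∃ S : Matrix (Fin n) (Fin rA) ℝ, VXᵀ * S = 0 ∧ Z = P * A + S * VAᵀ := by
  constructor
  · rintro ⟨hZ, hrank⟩
    obtain ⟨Y, rfl⟩ := exists_eq_mul_of_eq_mul_of_rank_le hZ hrank.le
    refine ⟨(Y * A - P * A) * VA, ?_, ?_⟩
    · have hker : X * (Y * A - P * A) = 0 := by rw [Matrix.mul_sub, ← hZ, hPA, sub_self]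
      rw [← Matrix.mul_assoc, (hXsvd.mul_eq_zero_iff _).mp hker, Matrix.zero_mul]
    · rw [Matrix.mul_assoc, Matrix.sub_mul, Matrix.mul_assoc, Matrix.mul_assoc,
        hAsvd.mul_mul_transpose_right]
      abel
  · rintro ⟨S, hS, rfl⟩
    have hZ : A = X * (P * A + S * VAᵀ) := by
      rw [Matrix.mul_add, hPA, ← Matrix.mul_assoc, (hXsvd.mul_eq_zero_iff S).mpr hS,
        Matrix.zero_mul, add_zero]
    refine ⟨hZ, le_antisymm ?_ (rank_le_of_eq_mul hZ)⟩
    have hfactor : P * A + S * VAᵀ = (P * A * VA + S) * VAᵀ := by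
      rw [Matrix.add_mul, Matrix.mul_assoc (P * A), Matrix.mul_assoc P,
        hAsvd.mul_mul_transpose_right]
    rw [hfactor]
    exact hAsvd.rank_mul_transpose_right_le _

theorem stmt0_general {m n r rA : ℕ} (X A : Matrix (Fin m) (Fin n) ℝ)
    (P : Matrix (Fin n) (Fin m) ℝ) (hP : IsMoorePenroseInv X P)
    (UX : Matrix (Fin m) (Fin r) ℝ) (σX : Fin r → ℝ) (VX : Matrix (Fin n) (Fin r) ℝ)
    (hXsvd : IsSkinnySVD X UX σX VX)
    (UA : Matrix (Fin m) (Fin rA) ℝ) (σA : Fin rA → ℝ) (VA : Matrix (Fin n) (Fin rA) ℝ)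
    (hAsvd : IsSkinnySVD A UA σA VA)
    (hfeas : ∃ Z : Matrix (Fin n) (Fin n) ℝ, A = X * Z) :
    IsLeast {k : ℕ | ∃ Z : Matrix (Fin n) (Fin n) ℝ, A = X * Z ∧ Z.rank = k} A.rank ∧
    ∀ Z : Matrix (Fin n) (Fin n) ℝ,
      (A = X * Z ∧ Z.rank = A.rank) ↔
        ∃ S : Matrix (Fin n) (Fin rA) ℝ, VXᵀ * S = 0 ∧ Z = P * A + S * VAᵀ := by
  obtain ⟨Z₀, hZ₀⟩ := hfeas
  have hPA : X * (P * A) = A := by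
    rw [hZ₀, ← Matrix.mul_assoc, ← Matrix.mul_assoc, hP.1]
  have hsol := eq_mul_and_rank_eq_iff hPA hXsvd hAsvd
  refine ⟨⟨⟨P * A, (hsol (P * A)).2 ⟨0, Matrix.mul_zero _, by rw [Matrix.zero_mul, add_zero]⟩⟩, ?_⟩,
    hsol⟩
  rintro k ⟨Z, hZ, rfl⟩
  exact rank_le_of_eq_mul hZ

/-- The minimum of `rank Z` over all `Z` with `A = X Z` equals `rank A`, and the
minimizers are exactly `Z = X† A + S V_Aᵀ` with `V_Xᵀ S = 0`. -/
theorem stmt0 {m n r rA : ℕ} (X A : Matrix (Fin m) (Fin n) ℝ) (hX : X ≠ 0)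
    (P : Matrix (Fin n) (Fin m) ℝ) (hP : IsMoorePenroseInv X P)
    (UX : Matrix (Fin m) (Fin r) ℝ) (σX : Fin r → ℝ) (VX : Matrix (Fin n) (Fin r) ℝ)
    (hXsvd : IsSkinnySVD X UX σX VX)
    (UA : Matrix (Fin m) (Fin rA) ℝ) (σA : Fin rA → ℝ) (VA : Matrix (Fin n) (Fin rA) ℝ)
    (hAsvd : IsSkinnySVD A UA σA VA)
    (hfeas : ∃ Z : Matrix (Fin n) (Fin n) ℝ, A = X * Z) :
    IsLeast {k : ℕ | ∃ Z : Matrix (Fin n) (Fin n) ℝ, A = X * Z ∧ Z.rank = k} A.rank ∧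
    ∀ Z : Matrix (Fin n) (Fin n) ℝ,
      (A = X * Z ∧ Z.rank = A.rank) ↔
        ∃ S : Matrix (Fin n) (Fin rA) ℝ, VXᵀ * S = 0 ∧ Z = P * A + S * VAᵀ :=
  stmt0_general X A P hP UX σX VX hXsvd UA σA VA hAsvd hfeas
end

section
/- If (Z*, L*) is an optimal solution to the original LatLRR problem (minimize rank(Z) + rank(L) subject to X = X Z + L X), then there exists another optimal solution (Z̃, L̃) such that X Z* = X Z̃ and Z̃ = V_X W̃ V_Xᵀ for some square matrix W̃ of size rank(X); specifically one may take W̃ = V_Xᵀ Z* V_X and L̃ = X(I − V_X W̃ V_Xᵀ) X†. -/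
open Matrix

/-!
Since `X V Vᵀ = X`, projecting `Z*` onto the row space of `X`, `Z̃ = V Vᵀ Z* V Vᵀ`, does not
change `X Z̃ = X Z*`, and it cannot increase the rank. Feasibility then forces
`X (I - Z̃) = X (I - Z*) = L* X`, so `L̃ = X (I - Z̃) X† = L* (X X†)` again has rank at most
`rank L*`, and `L̃ X = L* X` because `X X† X = X`. Hence `(Z̃, L̃)` is feasible with objective
value at most the optimal one.
-/

section

variable {m n k R : Type*} [Fintype n] [Fintype k] [CommRing R]

theorem mul_mul_transpose_eq_self [DecidableEq k] {X : Matrix m n R} {A : Matrix m k R}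
    {V : Matrix n k R} (hV : Vᵀ * V = 1) (hX : X = A * Vᵀ) : X * V * Vᵀ = X := by
  rw [hX, Matrix.mul_assoc A, hV, Matrix.mul_one]

theorem rank_mul_mul_mul_transpose_le [StrongRankCondition R] (V : Matrix n k R)
    (Z : Matrix n n R) :
    (V * (Vᵀ * Z * V) * Vᵀ).rank ≤ Z.rank :=
  calc (V * (Vᵀ * Z * V) * Vᵀ).rank ≤ (V * (Vᵀ * Z * V)).rank := rank_mul_le_left _ _
    _ ≤ (Vᵀ * Z * V).rank := rank_mul_le_right _ _
    _ ≤ (Vᵀ * Z).rank := rank_mul_le_left _ _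
    _ ≤ Z.rank := rank_mul_le_right _ _

variable [Fintype m]

def LatLRRFeasible (X : Matrix m n R) (Z : Matrix n n R) (L : Matrix m m R) : Prop :=
  X = X * Z + L * X

theorem LatLRRFeasible.mul_mul_mul_transpose_eq {X : Matrix m n R} {Z : Matrix n n R}
    {L : Matrix m m R} {V : Matrix n k R} (h : LatLRRFeasible X Z L) (hXV : X * V * Vᵀ = X) :
    X * (V * (Vᵀ * Z * V) * Vᵀ) = X * Z := by
  have hXZ : X * Z = X - L * X := eq_sub_of_add_eq h.symm
  calc X * (V * (Vᵀ * Z * V) * Vᵀ) = X * V * Vᵀ * Z * V * Vᵀ := by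
        simp only [Matrix.mul_assoc]
    _ = (X - L * X) * V * Vᵀ := by rw [hXV, hXZ]
    _ = X * Z := by
        rw [Matrix.sub_mul, Matrix.sub_mul, hXV, Matrix.mul_assoc (L * X), Matrix.mul_assoc L,
          ← Matrix.mul_assoc X, hXV, hXZ]

variable [DecidableEq n]

theorem LatLRRFeasible.mul_one_sub_mul_eq {X : Matrix m n R} {Z Z' : Matrix n n R}
    {L : Matrix m m R} (h : LatLRRFeasible X Z L) (hZ' : X * Z' = X * Z) (P : Matrix n m R) :
    X * (1 - Z') * P = L * (X * P) := by
  rw [Matrix.mul_sub, Matrix.mul_one, hZ', eq_sub_of_add_eq h.symm, sub_sub_cancel,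
    Matrix.mul_assoc]

theorem LatLRRFeasible.of_mul_eq {X : Matrix m n R} {Z Z' : Matrix n n R} {L : Matrix m m R}
    {P : Matrix n m R} (h : LatLRRFeasible X Z L) (hZ' : X * Z' = X * Z) (hP : X * P * X = X) :
    LatLRRFeasible X Z' (X * (1 - Z') * P) := by
  rw [LatLRRFeasible, h.mul_one_sub_mul_eq hZ', Matrix.mul_assoc L, hP, hZ']
  exact h

theorem LatLRRFeasible.rank_mul_one_sub_mul_le [StrongRankCondition R] {X : Matrix m n R}
    {Z Z' : Matrix n n R} {L : Matrix m m R} (h : LatLRRFeasible X Z L) (hZ' : X * Z' = X * Z)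
    (P : Matrix n m R) :
    (X * (1 - Z') * P).rank ≤ L.rank := by
  rw [h.mul_one_sub_mul_eq hZ']
  exact rank_mul_le_left _ _

end

theorem stmt3_general {m n r : ℕ} (X : Matrix (Fin m) (Fin n) ℝ)
    (P : Matrix (Fin n) (Fin m) ℝ) (hP : IsMoorePenroseInv X P)
    (UX : Matrix (Fin m) (Fin r) ℝ) (σX : Fin r → ℝ) (VX : Matrix (Fin n) (Fin r) ℝ)
    (hsvd : IsSkinnySVD X UX σX VX)
    (Zs : Matrix (Fin n) (Fin n) ℝ) (Ls : Matrix (Fin m) (Fin m) ℝ)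
    (hfeas : X = X * Zs + Ls * X)
    (hopt : ∀ (Z : Matrix (Fin n) (Fin n) ℝ) (L : Matrix (Fin m) (Fin m) ℝ),
      X = X * Z + L * X → Zs.rank + Ls.rank ≤ Z.rank + L.rank) :
    X = X * (VX * (VXᵀ * Zs * VX) * VXᵀ) + (X * (1 - VX * (VXᵀ * Zs * VX) * VXᵀ) * P) * X ∧
    (∀ (Z : Matrix (Fin n) (Fin n) ℝ) (L : Matrix (Fin m) (Fin m) ℝ),
      X = X * Z + L * X →
        (VX * (VXᵀ * Zs * VX) * VXᵀ).rank + (X * (1 - VX * (VXᵀ * Zs * VX) * VXᵀ) * P).rank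
          ≤ Z.rank + L.rank) ∧
    X * Zs = X * (VX * (VXᵀ * Zs * VX) * VXᵀ) := by
  have hfeas : LatLRRFeasible X Zs Ls := hfeas
  have hXV : X * VX * VXᵀ = X := mul_mul_transpose_eq_self hsvd.2.1 hsvd.2.2.2.1
  have hXZ := hfeas.mul_mul_mul_transpose_eq hXV
  refine ⟨hfeas.of_mul_eq hXZ hP.1, fun Z L hZL => ?_, hXZ.symm⟩
  calc _ ≤ Zs.rank + Ls.rank :=
        Nat.add_le_add (rank_mul_mul_mul_transpose_le VX Zs) (hfeas.rank_mul_one_sub_mul_le hXZ P)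
    _ ≤ Z.rank + L.rank := hopt Z L hZL

/-- If `(Z*, L*)` is optimal for the original LatLRR problem, then taking
`W̃ = V_Xᵀ Z* V_X`, `Z̃ = V_X W̃ V_Xᵀ` and `L̃ = X (I − Z̃) X†` yields another optimal
solution with `X Z* = X Z̃`. -/
theorem stmt3 {m n r : ℕ} (X : Matrix (Fin m) (Fin n) ℝ) (hX : X ≠ 0)
    (P : Matrix (Fin n) (Fin m) ℝ) (hP : IsMoorePenroseInv X P)
    (UX : Matrix (Fin m) (Fin r) ℝ) (σX : Fin r → ℝ) (VX : Matrix (Fin n) (Fin r) ℝ)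
    (hsvd : IsSkinnySVD X UX σX VX)
    (Zs : Matrix (Fin n) (Fin n) ℝ) (Ls : Matrix (Fin m) (Fin m) ℝ)
    (hfeas : X = X * Zs + Ls * X)
    (hopt : ∀ (Z : Matrix (Fin n) (Fin n) ℝ) (L : Matrix (Fin m) (Fin m) ℝ),
      X = X * Z + L * X → Zs.rank + Ls.rank ≤ Z.rank + L.rank) :
    X = X * (VX * (VXᵀ * Zs * VX) * VXᵀ) + (X * (1 - VX * (VXᵀ * Zs * VX) * VXᵀ) * P) * X ∧
    (∀ (Z : Matrix (Fin n) (Fin n) ℝ) (L : Matrix (Fin m) (Fin m) ℝ),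
      X = X * Z + L * X →
        (VX * (VXᵀ * Zs * VX) * VXᵀ).rank + (X * (1 - VX * (VXᵀ * Zs * VX) * VXᵀ) * P).rank
          ≤ Z.rank + L.rank) ∧
    X * Zs = X * (VX * (VXᵀ * Zs * VX) * VXᵀ) :=
  stmt3_general X P hP UX σX VX hsvd Zs Ls hfeas hopt
end

section
/- Every optimal solution Z* of the unconstrained problem of minimizing f(Z) = ‖Z‖_* + ‖X (I − Z) X†‖_* can be written as Z* = V_X Ŵ V_Xᵀ, where Ŵ = V_Xᵀ Z* V_X is a square matrix of size rank(X); equivalently, V_X V_Xᵀ Z* V_X V_Xᵀ = Z*. -/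
open Matrix

/-
`Q = V_X V_Xᵀ` is the orthogonal projection onto the row space of `X`, so `X Q = X` and
`Q X† = X†`. Replacing `Z*` by `Q Z* Q` therefore leaves `‖X (I − Z) X†‖_*` unchanged, and
optimality gives `‖Z*‖_* ≤ ‖Q Z* Q‖_*`. Such an inequality forces `Q Z* Q = Z*`: by nuclear-norm
duality some `W` of spectral norm `≤ 1` has `tr (Wᵀ Q Z* Q) = ‖Q Z* Q‖_*`, so `W' = Q W Q`
attains `‖Z*‖_*`. If `C = (1 - Q) Z* ≠ 0`, then `W' + s C` has spectral norm at most
`√(1 + s² ‖C‖_F²)` because `W'ᵀ C = 0`, while its pairing with `Z*` is `‖Z*‖_* + s ‖C‖_F²`;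
for small `s > 0` this beats the duality bound. The factor on the right follows by transposing.
-/

section SqOpNorm

variable {l m n : Type*} [Fintype l] [Fintype m] [Fintype n]

def SqOpNormLE (Y : Matrix m n ℝ) (K : ℝ) : Prop :=
  ∀ v : n → ℝ, (Y *ᵥ v) ⬝ᵥ (Y *ᵥ v) ≤ K * (v ⬝ᵥ v)

lemma dotProduct_self_nonneg (v : n → ℝ) : 0 ≤ v ⬝ᵥ v :=
  Finset.sum_nonneg fun i _ => mul_self_nonneg (v i)

lemma sq_dotProduct_le (u v : n → ℝ) : (u ⬝ᵥ v) ^ 2 ≤ (u ⬝ᵥ u) * (v ⬝ᵥ v) := by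
  simpa only [dotProduct, sq] using Finset.sum_mul_sq_le_sq_mul_sq Finset.univ u v

lemma dotProduct_le_sqrt_mul_sqrt (u v : n → ℝ) : u ⬝ᵥ v ≤ √(u ⬝ᵥ u) * √(v ⬝ᵥ v) := by
  simpa only [dotProduct, sq] using Real.sum_mul_le_sqrt_mul_sqrt Finset.univ u v

lemma mulVec_dotProduct (B : Matrix m n ℝ) (x : n → ℝ) (y : m → ℝ) :
    (B *ᵥ x) ⬝ᵥ y = x ⬝ᵥ (Bᵀ *ᵥ y) := by
  rw [dotProduct_mulVec, vecMul_transpose]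

lemma mulVec_dotProduct_mulVec (B : Matrix m n ℝ) (x y : n → ℝ) :
    (B *ᵥ x) ⬝ᵥ (B *ᵥ y) = x ⬝ᵥ ((Bᵀ * B) *ᵥ y) := by
  rw [mulVec_dotProduct, mulVec_mulVec]

namespace SqOpNormLE

lemma transpose {Y : Matrix m n ℝ} {K : ℝ} (hY : SqOpNormLE Y K) (hK : 0 ≤ K) :
    SqOpNormLE Yᵀ K := by
  intro u
  set w := Yᵀ *ᵥ u
  have hw : w ⬝ᵥ w = u ⬝ᵥ (Y *ᵥ w) := by
    rw [show w ⬝ᵥ w = (Yᵀ *ᵥ u) ⬝ᵥ w from rfl, mulVec_dotProduct, transpose_transpose]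
  have hCS := sq_dotProduct_le u (Y *ᵥ w)
  rw [← hw] at hCS
  have hYw := mul_le_mul_of_nonneg_left (hY w) (dotProduct_self_nonneg u)
  by_contra! hlt
  have hw0 : 0 < w ⬝ᵥ w := (mul_nonneg hK (dotProduct_self_nonneg u)).trans_lt hlt
  nlinarith [mul_lt_mul_of_pos_right hlt hw0]

lemma mul {A : Matrix l m ℝ} {B : Matrix m n ℝ} {a b : ℝ} (hA : SqOpNormLE A a)
    (hB : SqOpNormLE B b) (ha : 0 ≤ a) : SqOpNormLE (A * B) (a * b) := fun v =>
  calc ((A * B) *ᵥ v) ⬝ᵥ ((A * B) *ᵥ v) ≤ a * ((B *ᵥ v) ⬝ᵥ (B *ᵥ v)) := by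
        rw [← mulVec_mulVec]; exact hA _
    _ ≤ a * (b * (v ⬝ᵥ v)) := mul_le_mul_of_nonneg_left (hB v) ha
    _ = a * b * (v ⬝ᵥ v) := (mul_assoc _ _ _).symm

lemma smul {C : Matrix m n ℝ} {K : ℝ} (hC : SqOpNormLE C K) (s : ℝ) :
    SqOpNormLE (s • C) (s ^ 2 * K) := fun v => by
  rw [smul_mulVec, dotProduct_smul, smul_dotProduct, smul_eq_mul, smul_eq_mul, ← mul_assoc,
    ← sq, mul_assoc]
  exact mul_le_mul_of_nonneg_left (hC v) (sq_nonneg s)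

lemma add_of_transpose_mul_eq_zero {W C : Matrix m n ℝ} {a b : ℝ} (hW : SqOpNormLE W a)
    (hC : SqOpNormLE C b) (hWC : Wᵀ * C = 0) : SqOpNormLE (W + C) (a + b) := fun v => by
  have hcross : (W *ᵥ v) ⬝ᵥ (C *ᵥ v) = 0 := by
    rw [mulVec_dotProduct, mulVec_mulVec, hWC, zero_mulVec, dotProduct_zero]
  rw [add_mulVec, dotProduct_add, add_dotProduct, add_dotProduct, hcross,
    dotProduct_comm (C *ᵥ v), hcross]
  linarith [hW v, hC v]

end SqOpNormLE

lemma sqOpNormLE_trace_transpose_mul_self (C : Matrix m n ℝ) :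
    SqOpNormLE C (trace (Cᵀ * C)) := fun v => by
  have hrow : ∀ i, (C *ᵥ v) i ^ 2 ≤ (C i ⬝ᵥ C i) * (v ⬝ᵥ v) := fun i => sq_dotProduct_le (C i) v
  calc (C *ᵥ v) ⬝ᵥ (C *ᵥ v) = ∑ i, (C *ᵥ v) i ^ 2 := by simp only [dotProduct, sq]
    _ ≤ ∑ i, (C i ⬝ᵥ C i) * (v ⬝ᵥ v) := Finset.sum_le_sum fun i _ => hrow i
    _ = trace (Cᵀ * C) * (v ⬝ᵥ v) := by
      rw [← Finset.sum_mul, ← trace_transpose_mul, transpose_transpose]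
      simp only [trace, diag, mul_apply', transpose_apply]

lemma sqOpNormLE_one_of_symmetric_idempotent {Q : Matrix n n ℝ} (hQt : Qᵀ = Q)
    (hQQ : Q * Q = Q) : SqOpNormLE Q 1 := fun v => by
  have hQv : (Q *ᵥ v) ⬝ᵥ (Q *ᵥ v) = v ⬝ᵥ (Q *ᵥ v) := by
    rw [mulVec_dotProduct_mulVec, hQt, hQQ]
  have := sq_dotProduct_le v (Q *ᵥ v)
  rw [← hQv] at this
  nlinarith [dotProduct_self_nonneg (Q *ᵥ v), dotProduct_self_nonneg v]

end SqOpNorm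

section NuclearNorm

variable {m n : Type*} [Fintype m] [Fintype n] [DecidableEq n]

lemma nuclearNorm_nonneg (A : Matrix m n ℝ) : 0 ≤ nuclearNorm A :=
  Finset.sum_nonneg fun _ _ => Real.sqrt_nonneg _

lemma exists_orthogonal_nuclearNorm_eq_sum_sqrt (A : Matrix m n ℝ) :
    ∃ (V : Matrix n n ℝ) (μ : n → ℝ), V * Vᵀ = 1 ∧ Vᵀ * V = 1 ∧ (∀ i, 0 ≤ μ i) ∧
      (A * V)ᵀ * (A * V) = diagonal μ ∧ nuclearNorm A = ∑ i, √(μ i) := by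
  have hH : (Aᵀ * A).IsHermitian := by
    simpa [conjTranspose_eq_transpose_of_trivial] using isHermitian_conjTranspose_mul_self A
  set V : Matrix n n ℝ := (hH.eigenvectorUnitary : Matrix n n ℝ)
  have hstar : star V = Vᵀ := by
    rw [star_eq_conjTranspose, conjTranspose_eq_transpose_of_trivial]
  have hVVt : V * Vᵀ = 1 := hstar ▸ mem_unitaryGroup_iff.mp hH.eigenvectorUnitary.2
  have hVtV : Vᵀ * V = 1 := hstar ▸ mem_unitaryGroup_iff'.mp hH.eigenvectorUnitary.2
  have hspec : Aᵀ * A = V * diagonal hH.eigenvalues * Vᵀ := by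
    have h := hH.spectral_theorem
    rwa [Unitary.conjStarAlgAut_apply, hstar, RCLike.ofReal_real_eq_id, Function.id_comp] at h
  refine ⟨V, hH.eigenvalues, hVVt, hVtV, eigenvalues_conjTranspose_mul_self_nonneg A, ?_, rfl⟩
  calc (A * V)ᵀ * (A * V) = Vᵀ * (Aᵀ * A) * V := by
        rw [transpose_mul]; simp only [Matrix.mul_assoc]
    _ = Vᵀ * V * diagonal hH.eigenvalues * (Vᵀ * V) := by
        nth_rw 1 [hspec]; simp only [Matrix.mul_assoc]
    _ = diagonal hH.eigenvalues := by rw [hVtV, Matrix.one_mul, Matrix.mul_one]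

lemma trace_transpose_mul_le_sqrt_mul_nuclearNorm {Y A : Matrix m n ℝ} {K : ℝ}
    (hY : SqOpNormLE Y K) : trace (Yᵀ * A) ≤ √K * nuclearNorm A := by
  obtain ⟨V, μ, hVVt, hVtV, -, hgram, hnorm⟩ := exists_orthogonal_nuclearNorm_eq_sum_sqrt A
  have hdiag : ∀ (B : Matrix m n ℝ) i,
      ((B * V)ᵀ * (A * V)) i i = (B *ᵥ Vᵀ i) ⬝ᵥ (A *ᵥ Vᵀ i) := fun _ _ => rfl
  have hV : ∀ i, Vᵀ i ⬝ᵥ Vᵀ i = 1 := fun i => by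
    rw [show Vᵀ i ⬝ᵥ Vᵀ i = (Vᵀ * V) i i from rfl, hVtV, one_apply_eq]
  have hAV : ∀ i, (A *ᵥ Vᵀ i) ⬝ᵥ (A *ᵥ Vᵀ i) = μ i := fun i => by
    rw [← hdiag, hgram, diagonal_apply_eq]
  have htrace : trace (Yᵀ * A) = ∑ i, (Y *ᵥ Vᵀ i) ⬝ᵥ (A *ᵥ Vᵀ i) := by
    calc trace (Yᵀ * A) = trace (Yᵀ * A * (V * Vᵀ)) := by rw [hVVt, Matrix.mul_one]
      _ = trace ((Y * V)ᵀ * (A * V)) := by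
        rw [← Matrix.mul_assoc, trace_mul_comm, transpose_mul]; simp only [Matrix.mul_assoc]
      _ = _ := Finset.sum_congr rfl fun i _ => hdiag Y i
  rw [htrace, hnorm, Finset.mul_sum]
  refine Finset.sum_le_sum fun i _ => ?_
  calc (Y *ᵥ Vᵀ i) ⬝ᵥ (A *ᵥ Vᵀ i) ≤ √((Y *ᵥ Vᵀ i) ⬝ᵥ (Y *ᵥ Vᵀ i)) * √(μ i) := by
        rw [← hAV]; exact dotProduct_le_sqrt_mul_sqrt _ _
    _ ≤ √K * √(μ i) := by
        gcongr; simpa [hV] using hY (Vᵀ i)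

lemma exists_sqOpNormLE_one_trace_eq_nuclearNorm (A : Matrix m n ℝ) :
    ∃ W : Matrix m n ℝ, SqOpNormLE W 1 ∧ trace (Wᵀ * A) = nuclearNorm A := by
  obtain ⟨V, μ, hVVt, -, hμ, hgram, hnorm⟩ := exists_orthogonal_nuclearNorm_eq_sum_sqrt A
  -- `(√0)⁻¹ = 0`, so `τ` inverts the nonzero singular values and kills the zero ones
  set τ : n → ℝ := fun i => (√(μ i))⁻¹
  refine ⟨A * V * diagonal τ * Vᵀ, fun v => ?_, ?_⟩
  · set y := Vᵀ *ᵥ v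
    have hy : y ⬝ᵥ y = v ⬝ᵥ v := by
      rw [mulVec_dotProduct_mulVec, transpose_transpose, hVVt, one_mulVec]
    have hWv : (A * V * diagonal τ * Vᵀ) *ᵥ v = (A * V) *ᵥ (diagonal τ *ᵥ y) := by
      simp only [y, mulVec_mulVec, Matrix.mul_assoc]
    rw [hWv, mulVec_dotProduct_mulVec, hgram, one_mul, ← hy]
    simp only [dotProduct, mulVec_diagonal]
    refine Finset.sum_le_sum fun i _ => ?_
    have hμτ : μ i * τ i ^ 2 ≤ 1 := by
      rw [inv_pow, Real.sq_sqrt (hμ i)]; exact mul_inv_le_one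
    nlinarith [mul_le_mul_of_nonneg_right hμτ (mul_self_nonneg (y i))]
  · calc trace ((A * V * diagonal τ * Vᵀ)ᵀ * A) = trace (Aᵀ * (A * V * diagonal τ * Vᵀ)) := by
          rw [← trace_transpose, transpose_mul, transpose_transpose]
      _ = trace ((A * V)ᵀ * (A * V) * diagonal τ) := by
          rw [← Matrix.mul_assoc, trace_mul_comm, transpose_mul]; simp only [Matrix.mul_assoc]
      _ = nuclearNorm A := by
          rw [hgram, diagonal_mul_diagonal, trace_diagonal, hnorm]
          exact Finset.sum_congr rfl fun i _ => by rw [← div_eq_mul_inv, Real.div_sqrt]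

lemma nuclearNorm_transpose_le [DecidableEq m] (A : Matrix m n ℝ) :
    nuclearNorm Aᵀ ≤ nuclearNorm A := by
  obtain ⟨W, hW, hWA⟩ := exists_sqOpNormLE_one_trace_eq_nuclearNorm Aᵀ
  calc nuclearNorm Aᵀ = trace (Wᵀᵀ * A) := by rw [← hWA, trace_transpose_mul, transpose_transpose]
    _ ≤ nuclearNorm A := by
      simpa using trace_transpose_mul_le_sqrt_mul_nuclearNorm (A := A) (hW.transpose zero_le_one)

lemma nuclearNorm_transpose [DecidableEq m] (A : Matrix m n ℝ) : nuclearNorm Aᵀ = nuclearNorm A :=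
  (nuclearNorm_transpose_le A).antisymm (by simpa using nuclearNorm_transpose_le Aᵀ)

end NuclearNorm

lemma eq_zero_of_forall_add_mul_le_sqrt_mul {N t : ℝ} (hN : 0 ≤ N) (ht : 0 ≤ t)
    (h : ∀ s : ℝ, N + s * t ≤ √(1 + s ^ 2 * t) * N) : t = 0 := by
  -- `√(1 + x) ≤ 1 + x / 2` turns `h` into `s t ≤ s² t N / 2`, which fails for `s = 1 / (N + 1)`
  set s := 1 / (N + 1)
  have hs : 0 < s := by positivity
  have hsN : s * (N + 1) = 1 := one_div_mul_cancel (by positivity)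
  have hsqrt : √(1 + s ^ 2 * t) ≤ 1 + s ^ 2 * t / 2 :=
    Real.sqrt_le_iff.mpr ⟨by positivity, by nlinarith [sq_nonneg (s ^ 2 * t)]⟩
  have hst : s * t ≤ s * (s * t * N / 2) := by
    nlinarith [h s, mul_le_mul_of_nonneg_right hsqrt hN]
  have ht' : t ≤ s * t * N / 2 := le_of_mul_le_mul_left hst hs
  nlinarith [mul_nonneg ht hN]

section Compression

variable {m n : Type*} [Fintype m] [Fintype n] [DecidableEq m] [DecidableEq n]

lemma mul_eq_self_of_nuclearNorm_le_trace {Q : Matrix m m ℝ} (hQt : Qᵀ = Q) (hQQ : Q * Q = Q)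
    {A W : Matrix m n ℝ} (hW : SqOpNormLE W 1) (hQW : Q * W = W)
    (hA : nuclearNorm A ≤ trace (Wᵀ * A)) : Q * A = A := by
  set C := (1 - Q) * A
  have hRt : (1 - Q)ᵀ = 1 - Q := by rw [transpose_sub, transpose_one, hQt]
  have hQR : Q * (1 - Q) = 0 := by rw [Matrix.mul_sub, Matrix.mul_one, hQQ, sub_self]
  have hRR : (1 - Q) * (1 - Q) = 1 - Q := by rw [Matrix.sub_mul, hQR, Matrix.one_mul, sub_zero]
  have hWC : ∀ s : ℝ, Wᵀ * (s • C) = 0 := fun s => by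
    rw [← hQW, transpose_mul, hQt, Matrix.mul_smul, Matrix.mul_assoc, ← Matrix.mul_assoc Q,
      hQR, Matrix.zero_mul, Matrix.mul_zero, smul_zero]
  have hCA : Cᵀ * A = Cᵀ * C := by
    simp only [C, transpose_mul, hRt, Matrix.mul_assoc, ← Matrix.mul_assoc (1 - Q), hRR]
  set t := trace (Cᵀ * C)
  -- `W + s • C` is nearly a contraction, but its pairing with `A` grows linearly in `s`
  have hperturb : ∀ s : ℝ, nuclearNorm A + s * t ≤ √(1 + s ^ 2 * t) * nuclearNorm A := fun s =>
    calc nuclearNorm A + s * t ≤ trace (Wᵀ * A) + s * trace (Cᵀ * A) := by rw [hCA]; linarith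
      _ = trace ((W + s • C)ᵀ * A) := by
        rw [transpose_add, transpose_smul, Matrix.add_mul, Matrix.smul_mul, trace_add,
          trace_smul, smul_eq_mul]
      _ ≤ √(1 + s ^ 2 * t) * nuclearNorm A :=
        trace_transpose_mul_le_sqrt_mul_nuclearNorm <| hW.add_of_transpose_mul_eq_zero
          ((sqOpNormLE_trace_transpose_mul_self C).smul s) (hWC s)
  have ht : 0 ≤ t := by
    simpa [conjTranspose_eq_transpose_of_trivial] using
      (posSemidef_conjTranspose_mul_self C).trace_nonneg
  have hC : (1 - Q) * A = 0 := trace_conjTranspose_mul_self_eq_zero_iff.mp <| by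
    rw [conjTranspose_eq_transpose_of_trivial]
    exact eq_zero_of_forall_add_mul_le_sqrt_mul (nuclearNorm_nonneg A) ht hperturb
  rwa [Matrix.sub_mul, Matrix.one_mul, sub_eq_zero, eq_comm] at hC

theorem mul_mul_eq_self_of_nuclearNorm_le {P : Matrix m m ℝ} {Q : Matrix n n ℝ}
    (hPt : Pᵀ = P) (hPP : P * P = P) (hQt : Qᵀ = Q) (hQQ : Q * Q = Q) {A : Matrix m n ℝ}
    (h : nuclearNorm A ≤ nuclearNorm (P * A * Q)) : P * A * Q = A := by
  obtain ⟨W, hW, hWA⟩ := exists_sqOpNormLE_one_trace_eq_nuclearNorm (P * A * Q)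
  set W' := P * W * Q
  have hW' : SqOpNormLE W' 1 := by
    simpa using ((sqOpNormLE_one_of_symmetric_idempotent hPt hPP).mul hW zero_le_one).mul
      (sqOpNormLE_one_of_symmetric_idempotent hQt hQQ) (by norm_num)
  have htr : nuclearNorm A ≤ trace (W'ᵀ * A) := by
    refine h.trans_eq ?_
    rw [← hWA, transpose_mul, transpose_mul, hPt, hQt, Matrix.mul_assoc Q, trace_mul_comm Q]
    simp only [Matrix.mul_assoc]
  have hPA : P * A = A := mul_eq_self_of_nuclearNorm_le_trace hPt hPP hW'
    (by simp only [W', ← Matrix.mul_assoc, hPP]) htr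
  have hQA : Q * Aᵀ = Aᵀ := by
    refine mul_eq_self_of_nuclearNorm_le_trace hQt hQQ (hW'.transpose zero_le_one) ?_ ?_
    · rw [← hQt, ← transpose_mul]
      exact congrArg transpose (by simp only [W', Matrix.mul_assoc, hQQ])
    · rw [nuclearNorm_transpose, transpose_transpose, ← trace_transpose, transpose_mul,
        transpose_transpose, trace_mul_comm]
      exact htr
  have hAQ : A * Q = A := by simpa [hQt] using congrArg transpose hQA
  rw [hPA, hAQ]

end Compression

lemma IsMoorePenroseInv.mul_eq_self_of_mul_eq_self {m n : Type*} [Fintype m] [Fintype n]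
    {X : Matrix m n ℝ} {P : Matrix n m ℝ} (hP : IsMoorePenroseInv X P) {Q : Matrix n n ℝ}
    (hQt : Qᵀ = Q) (hXQ : X * Q = X) : Q * P = P := by
  obtain ⟨-, hPXP, -, hPXt⟩ := hP
  have hQXt : Q * Xᵀ = Xᵀ := by rw [← hQt, ← transpose_mul, hXQ]
  calc Q * P = Q * (P * X)ᵀ * P := by rw [hPXt, Matrix.mul_assoc, hPXP]
    _ = (P * X)ᵀ * P := by rw [transpose_mul, ← Matrix.mul_assoc Q, hQXt]
    _ = P := by rw [hPXt, hPXP]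

theorem stmt12_general {m n r : ℕ} (X : Matrix (Fin m) (Fin n) ℝ)
    (P : Matrix (Fin n) (Fin m) ℝ) (hP : IsMoorePenroseInv X P)
    (UX : Matrix (Fin m) (Fin r) ℝ) (σX : Fin r → ℝ) (VX : Matrix (Fin n) (Fin r) ℝ)
    (hsvd : IsSkinnySVD X UX σX VX)
    (Zs : Matrix (Fin n) (Fin n) ℝ)
    (hopt : ∀ Z : Matrix (Fin n) (Fin n) ℝ,
      nuclearNorm Zs + nuclearNorm (X * (1 - Zs) * P)
        ≤ nuclearNorm Z + nuclearNorm (X * (1 - Z) * P)) :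
    Zs = VX * (VXᵀ * Zs * VX) * VXᵀ := by
  obtain ⟨-, hVV, -, hXsvd, -⟩ := hsvd
  set Q := VX * VXᵀ
  have hQt : Qᵀ = Q := by rw [transpose_mul, transpose_transpose]
  have hQQ : Q * Q = Q := by rw [Matrix.mul_assoc, ← Matrix.mul_assoc VXᵀ, hVV, Matrix.one_mul]
  have hXQ : X * Q = X := by
    rw [hXsvd, Matrix.mul_assoc, ← Matrix.mul_assoc VXᵀ, hVV, Matrix.one_mul]
  have hQP : Q * P = P := hP.mul_eq_self_of_mul_eq_self hQt hXQ
  have hfit : X * (1 - Q * Zs * Q) * P = X * (1 - Zs) * P := by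
    simp only [Matrix.mul_sub, Matrix.sub_mul, Matrix.mul_one, ← Matrix.mul_assoc, hXQ]
    rw [Matrix.mul_assoc _ Q P, hQP]
  have hle : nuclearNorm Zs ≤ nuclearNorm (Q * Zs * Q) := by linarith [hfit ▸ hopt (Q * Zs * Q)]
  calc Zs = Q * Zs * Q := (mul_mul_eq_self_of_nuclearNorm_le hQt hQQ hQt hQQ hle).symm
    _ = VX * (VXᵀ * Zs * VX) * VXᵀ := by simp only [Q, Matrix.mul_assoc]

/-- Every optimal solution `Z*` of `min_Z ‖Z‖_* + ‖X (I − Z) X†‖_*` satisfies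
`Z* = V_X (V_Xᵀ Z* V_X) V_Xᵀ`, i.e. `V_X V_Xᵀ Z* V_X V_Xᵀ = Z*`. -/
theorem stmt12 {m n r : ℕ} (X : Matrix (Fin m) (Fin n) ℝ) (hX : X ≠ 0)
    (P : Matrix (Fin n) (Fin m) ℝ) (hP : IsMoorePenroseInv X P)
    (UX : Matrix (Fin m) (Fin r) ℝ) (σX : Fin r → ℝ) (VX : Matrix (Fin n) (Fin r) ℝ)
    (hsvd : IsSkinnySVD X UX σX VX)
    (Zs : Matrix (Fin n) (Fin n) ℝ)
    (hopt : ∀ Z : Matrix (Fin n) (Fin n) ℝ,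
      nuclearNorm Zs + nuclearNorm (X * (1 - Zs) * P)
        ≤ nuclearNorm Z + nuclearNorm (X * (1 - Z) * P)) :
    Zs = VX * (VXᵀ * Zs * VX) * VXᵀ :=
  stmt12_general X P hP UX σX VX hsvd Zs hopt
end

section
/- The set of optimal solutions (Z*, L*) to the heuristic LatLRR problem (minimize ‖Z‖_* + ‖L‖_* subject to X = X Z + L X) is exactly the set of pairs Z* = V_X Ŵ V_Xᵀ and L* = U_X (I − Ŵ) U_Xᵀ, where Ŵ ranges over all matrices of size rank(X) satisfying: (1) Ŵ is block diagonal compatibly with Σ_X, i.e., [Ŵ]_{ij} = 0 whenever [Σ_X]_{ii} ≠ [Σ_X]_{jj}; and (2) both Ŵ and I − Ŵ are symmetric positive semi-definite. -/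
open Matrix

/-!
The nuclear norm is dual to the operator norm: `tr (Bᵀ Z) ≤ ‖Z‖_*` for every contraction `B`, with
equality for a suitable `B`; in particular `tr Z ≤ ‖Z‖_*`, with equality exactly when `Z` is
positive semidefinite. Both facts are read off the columns of `Z Q`, where `Q` diagonalizes `Zᵀ Z`.

Compressing the constraint `X = X Z + L X` by `U_Xᵀ (·) V_X` gives `Σ W + M Σ = Σ` for
`W = V_Xᵀ Z V_X` and `M = U_Xᵀ L U_X`, whence `tr W + tr M = rank X`. As `V_X V_Xᵀ` and `U_X U_Xᵀ`
are contractions, `rank X ≤ ‖Z‖_* + ‖L‖_*`, and this value is attained at `(V_X V_Xᵀ, 0)`.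
At an optimum every inequality is tight, which forces `Z = V_X W V_Xᵀ` and `L = U_X M U_Xᵀ` with
`W, M` positive semidefinite; comparing the `(i, j)` and `(j, i)` entries of `Σ W + M Σ = Σ`
then gives `M = I - W` and `W i j = 0` whenever `σ i ≠ σ j`.
-/

namespace Matrix

lemma PosSemidef.isSymm {n : Type*} {A : Matrix n n ℝ} (hA : A.PosSemidef) : A.IsSymm := by
  simpa using hA.1

variable {m n r : Type*} [Fintype m] [Fintype n] [Fintype r]

lemma dotProduct_self_nonneg (x : n → ℝ) : 0 ≤ x ⬝ᵥ x :=
  Finset.sum_nonneg fun i _ => mul_self_nonneg (x i)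

lemma sq_dotProduct_le (x y : n → ℝ) : (x ⬝ᵥ y) ^ 2 ≤ (x ⬝ᵥ x) * (y ⬝ᵥ y) := by
  simpa only [dotProduct, sq] using Finset.sum_mul_sq_le_sq_mul_sq Finset.univ x y

lemma eq_smul_of_dotProduct_eq {x y : n → ℝ} {c : ℝ} (hc : x ⬝ᵥ x = c ^ 2)
    (hy : y ⬝ᵥ y ≤ 1) (h : y ⬝ᵥ x = c) : x = c • y := by
  have hsq : (x - c • y) ⬝ᵥ (x - c • y) = c ^ 2 * (y ⬝ᵥ y - 1) := by
    simp only [sub_dotProduct, dotProduct_sub, smul_dotProduct, dotProduct_smul, smul_eq_mul,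
      dotProduct_comm x y, h, hc]
    ring
  rw [← sub_eq_zero, ← dotProduct_self_eq_zero]
  refine le_antisymm ?_ (dotProduct_self_nonneg _)
  rw [hsq]
  exact mul_nonpos_of_nonneg_of_nonpos (sq_nonneg c) (by linarith)

def IsContraction (B : Matrix m n ℝ) : Prop :=
  ∀ x, B *ᵥ x ⬝ᵥ B *ᵥ x ≤ x ⬝ᵥ x

lemma mulVec_dotProduct_mulVec_self (B : Matrix m n ℝ) (x : n → ℝ) :
    B *ᵥ x ⬝ᵥ B *ᵥ x = x ⬝ᵥ (Bᵀ * B) *ᵥ x := by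
  rw [← mulVec_mulVec, dotProduct_mulVec x, vecMul_transpose]

namespace IsContraction

variable {B : Matrix m n ℝ}

lemma sq_dotProduct_mulVec_le (hB : IsContraction B) (y : m → ℝ) (x : n → ℝ) :
    (y ⬝ᵥ B *ᵥ x) ^ 2 ≤ (y ⬝ᵥ y) * (x ⬝ᵥ x) :=
  (sq_dotProduct_le y _).trans (mul_le_mul_of_nonneg_left (hB x) (dotProduct_self_nonneg y))

lemma of_transpose_mul_self_eq_diagonal [DecidableEq n] {e : n → ℝ}
    (h : Bᵀ * B = diagonal e) (he : ∀ i, e i ≤ 1) : IsContraction B := by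
  intro x
  rw [mulVec_dotProduct_mulVec_self, h]
  simp only [dotProduct, mulVec_diagonal]
  exact Finset.sum_le_sum fun i _ => by nlinarith [he i, mul_self_nonneg (x i)]

lemma of_transpose_mul_self_eq_one [DecidableEq n] (h : Bᵀ * B = 1) : IsContraction B :=
  of_transpose_mul_self_eq_diagonal (e := fun _ => 1) (by rw [h, diagonal_one]) fun _ => le_rfl

lemma one [DecidableEq n] : IsContraction (1 : Matrix n n ℝ) :=
  of_transpose_mul_self_eq_one (by simp)

lemma mul {C : Matrix n r ℝ} (hB : IsContraction B) (hC : IsContraction C) :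
    IsContraction (B * C) := fun x => by
  rw [← mulVec_mulVec]
  exact (hB _).trans (hC x)

lemma transpose (hB : IsContraction B) : IsContraction Bᵀ := by
  intro x
  -- With `a = ‖Bᵀ x‖²`, Cauchy–Schwarz gives `a² = ⟪x, B Bᵀ x⟫² ≤ ‖x‖² a`.
  have hcs := hB.sq_dotProduct_mulVec_le x (Bᵀ *ᵥ x)
  rw [dotProduct_mulVec x, ← mulVec_transpose] at hcs
  nlinarith [dotProduct_self_nonneg (Bᵀ *ᵥ x), dotProduct_self_nonneg x]

lemma trace_transpose_mul_mul_le {B : Matrix m m ℝ} (hB : IsContraction B)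
    (A : Matrix m n ℝ) : trace (Aᵀ * (B * A)) ≤ trace (Aᵀ * A) :=
  Finset.sum_le_sum fun i _ => le_of_sq_le_sq
    ((hB.sq_dotProduct_mulVec_le (Aᵀ i) (Aᵀ i)).trans_eq (sq _).symm) (dotProduct_self_nonneg _)

end IsContraction

lemma isContraction_mul_transpose {V : Matrix n r ℝ} [DecidableEq r] (hV : Vᵀ * V = 1) :
    IsContraction (V * Vᵀ) :=
  (IsContraction.of_transpose_mul_self_eq_one hV).mul
    (IsContraction.of_transpose_mul_self_eq_one hV).transpose

lemma PosSemidef.mul_mul_transpose_same {A : Matrix r r ℝ} (hA : A.PosSemidef)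
    (B : Matrix n r ℝ) : (B * A * Bᵀ).PosSemidef := by
  simpa [conjTranspose_eq_transpose_of_trivial] using hA.mul_mul_conjTranspose_same B

variable [DecidableEq n]

lemma exists_orthogonal_gram_eq_diagonal (Z : Matrix m n ℝ) :
    ∃ Q : Matrix n n ℝ, Qᵀ * Q = 1 ∧ Q * Qᵀ = 1 ∧ ∃ s : n → ℝ, (∀ i, 0 ≤ s i) ∧
      nuclearNorm Z = ∑ i, s i ∧ (Z * Q)ᵀ * (Z * Q) = diagonal fun i => s i ^ 2 := by
  have hZ : (Zᵀ * Z).PosSemidef := by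
    simpa [conjTranspose_eq_transpose_of_trivial] using posSemidef_conjTranspose_mul_self Z
  have hQ := hZ.1.eigenvectorUnitary.2
  set Q : Matrix n n ℝ := (hZ.1.eigenvectorUnitary : Matrix n n ℝ)
  have hQ1 : Qᵀ * Q = 1 := by simpa [star_eq_conjTranspose] using mem_unitaryGroup_iff'.mp hQ
  have hQ2 : Q * Qᵀ = 1 := by simpa [star_eq_conjTranspose] using mem_unitaryGroup_iff.mp hQ
  refine ⟨Q, hQ1, hQ2, fun i => √(hZ.1.eigenvalues i), fun i => Real.sqrt_nonneg _, rfl, ?_⟩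
  have hdiag : Qᵀ * (Zᵀ * Z) * Q = diagonal hZ.1.eigenvalues := by
    simpa [star_eq_conjTranspose] using hZ.1.conjStarAlgAut_star_eigenvectorUnitary
  simp only [Real.sq_sqrt (hZ.eigenvalues_nonneg _), transpose_mul, ← hdiag, Matrix.mul_assoc]

lemma trace_transpose_mul_eq_sum_columns (B Z : Matrix m n ℝ) {Q : Matrix n n ℝ}
    (hQ : Q * Qᵀ = 1) : trace (Bᵀ * Z) = ∑ i, (B * Q)ᵀ i ⬝ᵥ (Z * Q)ᵀ i := by
  change _ = trace ((B * Q)ᵀ * (Z * Q))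
  rw [transpose_mul, Matrix.mul_assoc, ← Matrix.mul_assoc Bᵀ, ← Matrix.mul_assoc, trace_mul_cycle,
    hQ, Matrix.one_mul]

section SingularColumns

variable {B Z : Matrix m n ℝ} {Q : Matrix n n ℝ} {s : n → ℝ}

lemma dotProduct_self_column_eq (hZQ : (Z * Q)ᵀ * (Z * Q) = diagonal fun i => s i ^ 2) (i : n) :
    (Z * Q)ᵀ i ⬝ᵥ (Z * Q)ᵀ i = s i ^ 2 :=
  (congrFun (congrFun hZQ i) i).trans (diagonal_apply_eq _ i)

lemma IsContraction.dotProduct_column_le (hB : IsContraction B) (hQ : Qᵀ * Q = 1)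
    (hs : ∀ i, 0 ≤ s i) (hZQ : (Z * Q)ᵀ * (Z * Q) = diagonal fun i => s i ^ 2) (i : n) :
    (B * Q)ᵀ i ⬝ᵥ (Z * Q)ᵀ i ≤ s i := by
  have hq : Qᵀ i ⬝ᵥ Qᵀ i = 1 := (congrFun (congrFun hQ i) i).trans (one_apply_eq i)
  refine le_of_sq_le_sq ?_ (hs i)
  have := hB.sq_dotProduct_mulVec_le ((Z * Q)ᵀ i) (Qᵀ i)
  rwa [dotProduct_self_column_eq hZQ, hq, mul_one, dotProduct_comm] at this

end SingularColumns

lemma IsContraction.trace_transpose_mul_le_nuclearNorm {B : Matrix m n ℝ} (hB : IsContraction B)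
    (Z : Matrix m n ℝ) : trace (Bᵀ * Z) ≤ nuclearNorm Z := by
  obtain ⟨Q, hQ1, hQ2, s, hs, hnorm, hZQ⟩ := exists_orthogonal_gram_eq_diagonal Z
  rw [hnorm, trace_transpose_mul_eq_sum_columns B Z hQ2]
  exact Finset.sum_le_sum fun i _ => hB.dotProduct_column_le hQ1 hs hZQ i

lemma IsContraction.exists_eq_mul_diagonal_of_trace_eq {B Z : Matrix m n ℝ}
    (hB : IsContraction B) (h : trace (Bᵀ * Z) = nuclearNorm Z) :
    ∃ Q : Matrix n n ℝ, Q * Qᵀ = 1 ∧ ∃ s : n → ℝ, (∀ i, 0 ≤ s i) ∧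
      Z * Q = B * Q * diagonal s := by
  obtain ⟨Q, hQ1, hQ2, s, hs, hnorm, hZQ⟩ := exists_orthogonal_gram_eq_diagonal Z
  refine ⟨Q, hQ2, s, hs, ?_⟩
  rw [hnorm, trace_transpose_mul_eq_sum_columns B Z hQ2] at h
  have hcol i : (B * Q)ᵀ i ⬝ᵥ (Z * Q)ᵀ i = s i :=
    (Finset.sum_eq_sum_iff_of_le fun i _ => hB.dotProduct_column_le hQ1 hs hZQ i).mp h i
      (Finset.mem_univ i)
  have hb i : (B * Q)ᵀ i ⬝ᵥ (B * Q)ᵀ i ≤ 1 :=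
    (hB (Qᵀ i)).trans_eq ((congrFun (congrFun hQ1 i) i).trans (one_apply_eq i))
  ext k i
  rw [mul_diagonal, mul_comm]
  exact congrFun (eq_smul_of_dotProduct_eq (dotProduct_self_column_eq hZQ i) (hb i) (hcol i)) k

lemma exists_isContraction_trace_eq_nuclearNorm (Z : Matrix m n ℝ) :
    ∃ B : Matrix m n ℝ, IsContraction B ∧ trace (Bᵀ * Z) = nuclearNorm Z := by
  obtain ⟨Q, hQ1, hQ2, s, hs, hnorm, hZQ⟩ := exists_orthogonal_gram_eq_diagonal Z
  -- `(s i)⁻¹ = 0` when `s i = 0`: the columns of `Z * Q * diagonal d` are unit vectors or zero.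
  set d : n → ℝ := fun i => (s i)⁻¹
  have hC : (Z * Q * diagonal d)ᵀ * (Z * Q) = diagonal fun i => d i * s i ^ 2 := by
    rw [transpose_mul, diagonal_transpose, Matrix.mul_assoc, hZQ, diagonal_mul_diagonal]
  have hd i : d i * s i ^ 2 = s i := by
    rcases eq_or_ne (s i) 0 with h | h
    · simp [d, h]
    · simp only [d]
      field_simp
  refine ⟨Z * Q * diagonal d * Qᵀ, ?_, ?_⟩
  · refine IsContraction.mul (.of_transpose_mul_self_eq_diagonal (e := fun i => s i * d i) ?_ ?_)
      (.of_transpose_mul_self_eq_one (by rw [transpose_transpose, hQ2]))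
    · rw [← Matrix.mul_assoc, hC, diagonal_mul_diagonal]
      simp only [hd]
    · intro i
      rcases eq_or_ne (s i) 0 with h | h <;> simp [d, h]
  · rw [transpose_mul, transpose_transpose, ← trace_mul_cycle, Matrix.mul_assoc _ Z, hC,
      trace_diagonal, hnorm]
    exact Finset.sum_congr rfl fun i _ => hd i

lemma trace_le_nuclearNorm (Z : Matrix n n ℝ) : trace Z ≤ nuclearNorm Z := by
  simpa using IsContraction.one.trace_transpose_mul_le_nuclearNorm Z

lemma PosSemidef.nuclearNorm_eq_trace {Z : Matrix n n ℝ} (hZ : Z.PosSemidef) :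
    nuclearNorm Z = trace Z := by
  refine le_antisymm ?_ (trace_le_nuclearNorm Z)
  obtain ⟨B, hB, hBZ⟩ := exists_isContraction_trace_eq_nuclearNorm Z
  obtain ⟨S, rfl⟩ : ∃ S : Matrix n n ℝ, Z = Sᵀ * S := by
    open scoped MatrixOrder in
    simpa [star_eq_conjTranspose] using CStarAlgebra.nonneg_iff_eq_star_mul_self.mp hZ.nonneg
  calc nuclearNorm (Sᵀ * S) = trace (Sᵀᵀ * (Bᵀ * Sᵀ)) := by
        rw [← hBZ, ← Matrix.mul_assoc, trace_mul_cycle, transpose_transpose, Matrix.mul_assoc]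
    _ ≤ trace (Sᵀᵀ * Sᵀ) := hB.transpose.trace_transpose_mul_mul_le Sᵀ
    _ = trace (Sᵀ * S) := by rw [transpose_transpose, trace_mul_comm]

lemma trace_transpose_mul_mul_le_nuclearNorm [DecidableEq r] {V : Matrix n r ℝ}
    (hV : Vᵀ * V = 1) (Z : Matrix n n ℝ) : trace (Vᵀ * Z * V) ≤ nuclearNorm Z := by
  have := (isContraction_mul_transpose hV).trace_transpose_mul_le_nuclearNorm Z
  rwa [transpose_mul, transpose_transpose, ← trace_mul_cycle] at this

lemma posSemidef_of_trace_eq_nuclearNorm {Z : Matrix n n ℝ} (h : trace Z = nuclearNorm Z) :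
    Z.PosSemidef := by
  obtain ⟨Q, hQ, s, hs, hZQ⟩ :=
    IsContraction.one.exists_eq_mul_diagonal_of_trace_eq (by simpa using h)
  rw [Matrix.one_mul] at hZQ
  have hZ : Z = Q * diagonal s * Qᵀ := by rw [← hZQ, Matrix.mul_assoc, hQ, Matrix.mul_one]
  exact hZ ▸ (PosSemidef.diagonal hs).mul_mul_transpose_same Q

lemma eq_mul_mul_transpose_of_trace_eq_nuclearNorm [DecidableEq r] {V : Matrix n r ℝ}
    (hV : Vᵀ * V = 1) {Z : Matrix n n ℝ} (h : trace (Vᵀ * Z * V) = nuclearNorm Z) :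
    Z.PosSemidef ∧ Z = V * (Vᵀ * Z * V) * Vᵀ := by
  have hPsymm : (V * Vᵀ)ᵀ = V * Vᵀ := by rw [transpose_mul, transpose_transpose]
  have hPidem : V * Vᵀ * (V * Vᵀ) = V * Vᵀ := by
    rw [Matrix.mul_assoc, ← Matrix.mul_assoc Vᵀ, hV, Matrix.one_mul]
  have htr : trace (V * Vᵀ * Z) = nuclearNorm Z := by rwa [← trace_mul_cycle]
  obtain ⟨Q, hQ, s, -, hZQ⟩ :=
    (isContraction_mul_transpose hV).exists_eq_mul_diagonal_of_trace_eq (hPsymm.symm ▸ htr)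
  have hPZQ : V * Vᵀ * Z * Q = Z * Q := by
    rw [Matrix.mul_assoc _ Z, hZQ, ← Matrix.mul_assoc, ← Matrix.mul_assoc, hPidem]
  have hPZ : V * Vᵀ * Z = Z := by
    simpa [Matrix.mul_assoc, hQ] using congrArg (· * Qᵀ) hPZQ
  have hZ : Z.PosSemidef := posSemidef_of_trace_eq_nuclearNorm (by rwa [hPZ] at htr)
  have hZP : Z * (V * Vᵀ) = Z := by
    rw [← hPsymm, ← hZ.isSymm.eq, ← transpose_mul, hPZ]
  refine ⟨hZ, ?_⟩
  calc Z = V * Vᵀ * Z * (V * Vᵀ) := by rw [hPZ, hZP]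
    _ = V * (Vᵀ * Z * V) * Vᵀ := by simp only [Matrix.mul_assoc]

end Matrix

namespace LatLRR

open Matrix

variable {m n r : Type*}

def IsBlockCompatible (σ : r → ℝ) (W : Matrix r r ℝ) : Prop :=
  ∀ i j, σ i ≠ σ j → W i j = 0

variable [DecidableEq r] {σ : r → ℝ}

lemma isBlockCompatible_one : IsBlockCompatible σ 1 :=
  fun _ _ h => one_apply_ne (ne_of_apply_ne σ h)

variable [Fintype m] [Fintype n] [Fintype r]
  {U : Matrix m r ℝ} {V : Matrix n r ℝ} {Z : Matrix n n ℝ} {L : Matrix m m ℝ}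

def IsFeasible (X : Matrix m n ℝ) (Z : Matrix n n ℝ) (L : Matrix m m ℝ) : Prop :=
  X = X * Z + L * X

lemma IsBlockCompatible.diagonal_mul_comm {W : Matrix r r ℝ} (hW : IsBlockCompatible σ W) :
    diagonal σ * W = W * diagonal σ := by
  ext i j
  rw [diagonal_mul, mul_diagonal]
  by_cases hij : σ i = σ j
  · rw [hij, mul_comm]
  · simp [hW i j hij]

lemma IsBlockCompatible.isFeasible (hU : Uᵀ * U = 1) (hV : Vᵀ * V = 1) {W : Matrix r r ℝ}
    (hW : IsBlockCompatible σ W) :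
    IsFeasible (U * diagonal σ * Vᵀ) (V * W * Vᵀ) (U * (1 - W) * Uᵀ) := by
  refine Eq.symm ?_
  calc _ = U * (diagonal σ * (Vᵀ * V) * W + (1 - W) * (Uᵀ * U) * diagonal σ) * Vᵀ := by
        simp only [Matrix.mul_add, Matrix.add_mul, Matrix.mul_assoc]
    _ = U * diagonal σ * Vᵀ := by
        rw [hU, hV, Matrix.mul_one, Matrix.mul_one, hW.diagonal_mul_comm, Matrix.sub_mul,
          Matrix.one_mul, add_sub_cancel]

lemma IsFeasible.diagonal_mul_add_mul_diagonal_eq (hU : Uᵀ * U = 1) (hV : Vᵀ * V = 1)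
    (h : IsFeasible (U * diagonal σ * Vᵀ) Z L) :
    diagonal σ * (Vᵀ * Z * V) + Uᵀ * L * U * diagonal σ = diagonal σ := by
  have hU' (A : Matrix r n ℝ) : Uᵀ * (U * A) = A := by rw [← Matrix.mul_assoc, hU, Matrix.one_mul]
  simpa [Matrix.mul_add, Matrix.add_mul, Matrix.mul_assoc, hU', hV] using
    (congrArg (fun A => Uᵀ * A * V) h).symm

lemma apply_self_add_apply_self_eq_one (hσ : ∀ i, σ i ≠ 0) {W M : Matrix r r ℝ}
    (h : diagonal σ * W + M * diagonal σ = diagonal σ) (i : r) : W i i + M i i = 1 := by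
  have := congrFun (congrFun h i) i
  rw [Matrix.add_apply, diagonal_mul, mul_diagonal, diagonal_apply_eq] at this
  exact mul_left_cancel₀ (hσ i) (by linear_combination this)

lemma trace_add_trace_eq_card (hσ : ∀ i, σ i ≠ 0) {W M : Matrix r r ℝ}
    (h : diagonal σ * W + M * diagonal σ = diagonal σ) :
    trace W + trace M = Fintype.card r := by
  rw [← trace_add, trace]
  simp [apply_self_add_apply_self_eq_one hσ h]

lemma eq_one_sub_and_isBlockCompatible (hσ : ∀ i, 0 < σ i) {W M : Matrix r r ℝ}
    (hW : W.IsSymm) (hM : M.IsSymm) (h : diagonal σ * W + M * diagonal σ = diagonal σ) :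
    M = 1 - W ∧ IsBlockCompatible σ W := by
  -- By symmetry, the `(i, j)` and `(j, i)` entries read `σᵢ w + σⱼ m = 0 = σⱼ w + σᵢ m`.
  have offdiag i j (hij : i ≠ j) :
      (σ i + σ j) * (W i j + M i j) = 0 ∧ (σ i - σ j) * (W i j - M i j) = 0 := by
    have e1 := congrFun (congrFun h i) j
    have e2 := congrFun (congrFun h j) i
    simp only [Matrix.add_apply, diagonal_mul, mul_diagonal, diagonal_apply_ne σ hij,
      diagonal_apply_ne σ hij.symm, hW.apply, hM.apply] at e1 e2
    exact ⟨by linear_combination e1 + e2, by linear_combination e1 - e2⟩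
  have hsum i j (hij : i ≠ j) : W i j + M i j = 0 :=
    (mul_eq_zero.mp (offdiag i j hij).1).resolve_left (by linarith [hσ i, hσ j])
  refine ⟨?_, fun i j hσij => ?_⟩
  · ext i j
    rcases eq_or_ne i j with rfl | hij
    · linarith [apply_self_add_apply_self_eq_one (fun i => (hσ i).ne') h i,
        one_apply_eq (α := ℝ) i, Matrix.sub_apply 1 W i i]
    · simp [one_apply_ne hij, eq_neg_of_add_eq_zero_right (hsum i j hij)]
  · have hij : i ≠ j := fun h => hσij (h ▸ rfl)
    have := (mul_eq_zero.mp (offdiag i j hij).2).resolve_left (sub_ne_zero.mpr hσij)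
    linarith [hsum i j hij]

variable [DecidableEq m] [DecidableEq n]

lemma nuclearNorm_add_nuclearNorm_eq_card (hU : Uᵀ * U = 1) (hV : Vᵀ * V = 1)
    {W : Matrix r r ℝ} (hW : W.PosSemidef) (hW1 : (1 - W).PosSemidef) :
    nuclearNorm (V * W * Vᵀ) + nuclearNorm (U * (1 - W) * Uᵀ) = Fintype.card r := by
  rw [(hW.mul_mul_transpose_same V).nuclearNorm_eq_trace,
    (hW1.mul_mul_transpose_same U).nuclearNorm_eq_trace, trace_mul_cycle, hV, Matrix.one_mul,
    trace_mul_cycle, hU, Matrix.one_mul, trace_sub, trace_one]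
  ring

lemma IsFeasible.card_le_nuclearNorm_add (hU : Uᵀ * U = 1) (hV : Vᵀ * V = 1)
    (hσ : ∀ i, σ i ≠ 0) (h : IsFeasible (U * diagonal σ * Vᵀ) Z L) :
    (Fintype.card r : ℝ) ≤ nuclearNorm Z + nuclearNorm L := by
  rw [← trace_add_trace_eq_card hσ (h.diagonal_mul_add_mul_diagonal_eq hU hV)]
  exact add_le_add (trace_transpose_mul_mul_le_nuclearNorm hV Z)
    (trace_transpose_mul_mul_le_nuclearNorm hU L)

theorem IsFeasible.exists_of_nuclearNorm_add_le_card (hU : Uᵀ * U = 1) (hV : Vᵀ * V = 1)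
    (hσ : ∀ i, 0 < σ i) (h : IsFeasible (U * diagonal σ * Vᵀ) Z L)
    (hval : nuclearNorm Z + nuclearNorm L ≤ Fintype.card r) :
    ∃ W : Matrix r r ℝ, IsBlockCompatible σ W ∧ W.PosSemidef ∧ (1 - W).PosSemidef ∧
      Z = V * W * Vᵀ ∧ L = U * (1 - W) * Uᵀ := by
  have hD := h.diagonal_mul_add_mul_diagonal_eq hU hV
  have htr := trace_add_trace_eq_card (fun i => (hσ i).ne') hD
  have hZ := trace_transpose_mul_mul_le_nuclearNorm hV Z
  have hL := trace_transpose_mul_mul_le_nuclearNorm hU L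
  obtain ⟨hZpsd, hZeq⟩ := eq_mul_mul_transpose_of_trace_eq_nuclearNorm hV (by linarith)
  obtain ⟨hLpsd, hLeq⟩ := eq_mul_mul_transpose_of_trace_eq_nuclearNorm hU (by linarith)
  have hW : (Vᵀ * Z * V).PosSemidef := by simpa using hZpsd.mul_mul_transpose_same Vᵀ
  have hM : (Uᵀ * L * U).PosSemidef := by simpa using hLpsd.mul_mul_transpose_same Uᵀ
  obtain ⟨hMW, hblock⟩ := eq_one_sub_and_isBlockCompatible hσ hW.isSymm hM.isSymm hD
  exact ⟨_, hblock, hW, hMW ▸ hM, hZeq, hMW ▸ hLeq⟩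

end LatLRR

open LatLRR

theorem stmt14_general {m n r : ℕ} (X : Matrix (Fin m) (Fin n) ℝ)
    (UX : Matrix (Fin m) (Fin r) ℝ) (σX : Fin r → ℝ) (VX : Matrix (Fin n) (Fin r) ℝ)
    (hsvd : IsSkinnySVD X UX σX VX)
    (Z : Matrix (Fin n) (Fin n) ℝ) (L : Matrix (Fin m) (Fin m) ℝ) :
    (X = X * Z + L * X ∧
      ∀ (Z' : Matrix (Fin n) (Fin n) ℝ) (L' : Matrix (Fin m) (Fin m) ℝ),
        X = X * Z' + L' * X →
          nuclearNorm Z + nuclearNorm L ≤ nuclearNorm Z' + nuclearNorm L')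
    ↔ ∃ W : Matrix (Fin r) (Fin r) ℝ,
        (∀ i j, σX i ≠ σX j → W i j = 0) ∧
        W.PosSemidef ∧ (1 - W).PosSemidef ∧
        Z = VX * W * VXᵀ ∧ L = UX * (1 - W) * UXᵀ := by
  obtain ⟨hU, hV, hσ, rfl, -⟩ := hsvd
  constructor
  · rintro ⟨hfeas, hopt⟩
    refine IsFeasible.exists_of_nuclearNorm_add_le_card hU hV hσ hfeas ?_
    have h₁ : (1 - 1 : Matrix (Fin r) (Fin r) ℝ).PosSemidef := by simpa using PosSemidef.zero
    exact (hopt _ _ (isBlockCompatible_one.isFeasible hU hV)).trans_eq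
      (nuclearNorm_add_nuclearNorm_eq_card hU hV PosSemidef.one h₁)
  · rintro ⟨W, hblock, hW, hW1, rfl, rfl⟩
    refine ⟨IsBlockCompatible.isFeasible hU hV hblock, fun Z' L' h => ?_⟩
    rw [nuclearNorm_add_nuclearNorm_eq_card hU hV hW hW1]
    exact IsFeasible.card_le_nuclearNorm_add hU hV (fun i => (hσ i).ne') h

/-- Complete solutions to the heuristic LatLRR problem: `(Z, L)` is optimal iff
`Z = V_X Ŵ V_Xᵀ` and `L = U_X (I − Ŵ) U_Xᵀ` where `Ŵ` is block diagonal compatibly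
with `Σ_X` and both `Ŵ` and `I − Ŵ` are symmetric positive semi-definite. -/
theorem stmt14 {m n r : ℕ} (X : Matrix (Fin m) (Fin n) ℝ) (hX : X ≠ 0)
    (UX : Matrix (Fin m) (Fin r) ℝ) (σX : Fin r → ℝ) (VX : Matrix (Fin n) (Fin r) ℝ)
    (hsvd : IsSkinnySVD X UX σX VX)
    (Z : Matrix (Fin n) (Fin n) ℝ) (L : Matrix (Fin m) (Fin m) ℝ) :
    (X = X * Z + L * X ∧
      ∀ (Z' : Matrix (Fin n) (Fin n) ℝ) (L' : Matrix (Fin m) (Fin m) ℝ),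
        X = X * Z' + L' * X →
          nuclearNorm Z + nuclearNorm L ≤ nuclearNorm Z' + nuclearNorm L')
    ↔ ∃ W : Matrix (Fin r) (Fin r) ℝ,
        (∀ i j, σX i ≠ σX j → W i j = 0) ∧
        W.PosSemidef ∧ (1 - W).PosSemidef ∧
        Z = VX * W * VXᵀ ∧ L = UX * (1 - W) * UXᵀ :=
  stmt14_general X UX σX VX hsvd Z L
end

section
/- If rank(X) ≥ 1, then the heuristic LatLRR problem (minimize ‖Z‖_* + ‖L‖_* subject to X = X Z + L X) has at least two distinct optimal solutions; in particular, both (X† X, 0) and ((1/2) X† X, (1/2) X X†) are optimal solutions. -/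
open Matrix

/-!
Multiplying the constraint `X = X Z + L X` on the left by `X†` and taking traces gives
`tr (X† X) = tr (X† X Z) + tr (X X† L)`. Both `X† X` and `X X†` are orthogonal projections, and
`tr (Q Z) ≤ ‖Z‖_*` for every contraction `Q` (expand the trace in an eigenbasis of `Zᵀ Z` and use
Cauchy–Schwarz), so `tr (X† X)` bounds the objective from below. Since `‖c Q‖_* = c tr Q` for an
orthogonal projection `Q` and `c ≥ 0`, both candidates attain this bound, and they differ because
`X† X ≠ 0` when `X ≠ 0`.
-/

lemma Real.sqrt_eq_div_of_sq_eq_sq_mul {x c : ℝ} (hc : 0 ≤ c) (h : x ^ 2 = c ^ 2 * x) :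
    √x = x / c := by
  have : x * (x - c ^ 2) = 0 := by linear_combination h
  rcases mul_eq_zero.1 this with rfl | hx
  · simp
  · obtain rfl : x = c ^ 2 := by linarith
    rcases hc.eq_or_lt with rfl | hc
    · simp
    · rw [Real.sqrt_sq hc.le]; field_simp

namespace Matrix

variable {m n : Type*} [Fintype m]

lemma isHermitian_transpose_mul_self (A : Matrix m n ℝ) : (Aᵀ * A).IsHermitian := by
  simpa [conjTranspose_eq_transpose_of_trivial] using isHermitian_conjTranspose_mul_self A

variable [Fintype n]

lemma _root_.IsStarProjection.matrix_transpose_eq {Q : Matrix n n ℝ} (hQ : IsStarProjection Q) :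
    Qᵀ = Q := by
  simpa [star_eq_conjTranspose, conjTranspose_eq_transpose_of_trivial] using
    hQ.isSelfAdjoint.star_eq

lemma _root_.IsStarProjection.dotProduct_mulVec_self_le {Q : Matrix n n ℝ}
    (hQ : IsStarProjection Q) (v : n → ℝ) : (Q *ᵥ v) ⬝ᵥ (Q *ᵥ v) ≤ v ⬝ᵥ v := by
  set w := v - Q *ᵥ v
  have hQw : Q *ᵥ w = 0 := by
    rw [mulVec_sub, mulVec_mulVec, hQ.isIdempotentElem.eq, sub_self]
  have horth : (Q *ᵥ v) ⬝ᵥ w = 0 := by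
    rw [← hQ.matrix_transpose_eq, mulVec_transpose, ← dotProduct_mulVec, hQw, dotProduct_zero]
  have hw : 0 ≤ w ⬝ᵥ w := by simpa using dotProduct_star_self_nonneg w
  have hv : Q *ᵥ v + w = v := add_sub_cancel _ _
  calc (Q *ᵥ v) ⬝ᵥ (Q *ᵥ v) ≤ (Q *ᵥ v) ⬝ᵥ (Q *ᵥ v) + 2 * ((Q *ᵥ v) ⬝ᵥ w) + w ⬝ᵥ w := by
        rw [horth]; linarith
    _ = (Q *ᵥ v + w) ⬝ᵥ (Q *ᵥ v + w) := by
        rw [add_dotProduct, dotProduct_add, dotProduct_add, dotProduct_comm w (Q *ᵥ v)]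
        ring
    _ = v ⬝ᵥ v := by rw [hv]

lemma dotProduct_le_sqrt_mul_sqrt (u w : n → ℝ) : u ⬝ᵥ w ≤ √(u ⬝ᵥ u) * √(w ⬝ᵥ w) := by
  simpa [dotProduct, sq] using Real.sum_mul_le_sqrt_mul_sqrt Finset.univ u w

variable [DecidableEq n]

lemma nuclearNorm_eq_sum_sqrt_eigenvalues (A : Matrix m n ℝ) :
    nuclearNorm A = ∑ i, √((isHermitian_transpose_mul_self A).eigenvalues i) :=
  rfl

@[simp]
lemma nuclearNorm_zero : nuclearNorm (0 : Matrix m n ℝ) = 0 := by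
  have hH := isHermitian_transpose_mul_self (0 : Matrix m n ℝ)
  rw [nuclearNorm_eq_sum_sqrt_eigenvalues, hH.eigenvalues_eq_zero_iff.2 (by simp)]
  simp

lemma IsHermitian.eigenvalues_sq_of_mul_self_eq_smul {M : Matrix n n ℝ} (hM : M.IsHermitian)
    {c : ℝ} (h : M * M = c • M) (i : n) :
    hM.eigenvalues i ^ 2 = c * hM.eigenvalues i := by
  have hu : ⇑(hM.eigenvectorBasis i) ≠ 0 :=
    (WithLp.ofLp_eq_zero 2).ne.2 (hM.eigenvectorBasis.orthonormal.ne_zero i)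
  refine smul_left_injective ℝ hu ?_
  calc (hM.eigenvalues i ^ 2) • ⇑(hM.eigenvectorBasis i)
      = (M * M) *ᵥ ⇑(hM.eigenvectorBasis i) := by
        rw [← mulVec_mulVec, hM.mulVec_eigenvectorBasis, mulVec_smul,
          hM.mulVec_eigenvectorBasis, smul_smul, sq]
    _ = (c * hM.eigenvalues i) • ⇑(hM.eigenvectorBasis i) := by
        rw [h, smul_mulVec, hM.mulVec_eigenvectorBasis, smul_smul]

lemma IsHermitian.sum_sqrt_eigenvalues_of_mul_self_eq_smul {M : Matrix n n ℝ}
    (hM : M.IsHermitian) {c : ℝ} (hc : 0 ≤ c) (h : M * M = c ^ 2 • M) :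
    ∑ i, √(hM.eigenvalues i) = M.trace / c := by
  rw [hM.trace_eq_sum_eigenvalues, Finset.sum_div]
  exact Finset.sum_congr rfl fun i _ =>
    Real.sqrt_eq_div_of_sq_eq_sq_mul hc (hM.eigenvalues_sq_of_mul_self_eq_smul h i)

lemma nuclearNorm_smul_of_isStarProjection {Q : Matrix n n ℝ} (hQ : IsStarProjection Q)
    {c : ℝ} (hc : 0 ≤ c) : nuclearNorm (c • Q) = c * Q.trace := by
  have hM : (c • Q)ᵀ * (c • Q) = c ^ 2 • Q := by
    rw [transpose_smul, hQ.matrix_transpose_eq, smul_mul_smul_comm, hQ.isIdempotentElem.eq, sq]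
  have hMM : ((c • Q)ᵀ * (c • Q)) * ((c • Q)ᵀ * (c • Q)) = c ^ 2 • ((c • Q)ᵀ * (c • Q)) := by
    rw [hM, smul_mul_smul_comm, hQ.isIdempotentElem.eq, smul_smul]
  rw [nuclearNorm_eq_sum_sqrt_eigenvalues,
    (isHermitian_transpose_mul_self _).sum_sqrt_eigenvalues_of_mul_self_eq_smul hc hMM, hM,
    trace_smul, smul_eq_mul]
  rcases hc.eq_or_lt with rfl | hc
  · simp
  · field_simp

lemma nuclearNorm_of_isStarProjection {Q : Matrix n n ℝ} (hQ : IsStarProjection Q) :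
    nuclearNorm Q = Q.trace := by
  simpa using nuclearNorm_smul_of_isStarProjection hQ zero_le_one

lemma IsHermitian.trace_eq_sum_dotProduct_eigenvectorBasis {H : Matrix n n ℝ}
    (hH : H.IsHermitian) (A : Matrix n n ℝ) :
    A.trace = ∑ i, ⇑(hH.eigenvectorBasis i) ⬝ᵥ (A *ᵥ ⇑(hH.eigenvectorBasis i)) := by
  set U : Matrix n n ℝ := (hH.eigenvectorUnitary : Matrix n n ℝ)
  calc A.trace = (star U * (A * U)).trace := by
        rw [trace_mul_comm, mul_assoc, Unitary.mul_star_self_of_mem hH.eigenvectorUnitary.2,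
          mul_one]
    _ = _ := by
        simp only [trace, diag_apply, mul_apply, star_apply, star_trivial, dotProduct, mulVec, U,
          IsHermitian.eigenvectorUnitary_apply]

lemma IsHermitian.dotProduct_self_eigenvectorBasis {H : Matrix n n ℝ} (hH : H.IsHermitian)
    (i : n) : ⇑(hH.eigenvectorBasis i) ⬝ᵥ ⇑(hH.eigenvectorBasis i) = 1 := by
  have h := orthonormal_iff_ite.1 hH.eigenvectorBasis.orthonormal i i
  rw [if_pos rfl, EuclideanSpace.inner_eq_star_dotProduct] at h
  simpa using h

lemma dotProduct_mulVec_self_eigenvectorBasis (A : Matrix m n ℝ) (i : n) :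
    let hH := isHermitian_transpose_mul_self A
    (A *ᵥ ⇑(hH.eigenvectorBasis i)) ⬝ᵥ (A *ᵥ ⇑(hH.eigenvectorBasis i)) = hH.eigenvalues i := by
  intro hH
  rw [dotProduct_mulVec, ← mulVec_transpose, mulVec_mulVec, hH.mulVec_eigenvectorBasis,
    smul_dotProduct, hH.dotProduct_self_eigenvectorBasis, smul_eq_mul, mul_one]

theorem trace_mul_le_nuclearNorm {Q : Matrix n m ℝ}
    (hQ : ∀ v, (Q *ᵥ v) ⬝ᵥ (Q *ᵥ v) ≤ v ⬝ᵥ v) (Z : Matrix m n ℝ) :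
    (Q * Z).trace ≤ nuclearNorm Z := by
  have hH := isHermitian_transpose_mul_self Z
  rw [hH.trace_eq_sum_dotProduct_eigenvectorBasis, nuclearNorm_eq_sum_sqrt_eigenvalues]
  refine Finset.sum_le_sum fun i _ => ?_
  set u := ⇑(hH.eigenvectorBasis i)
  calc u ⬝ᵥ ((Q * Z) *ᵥ u)
      ≤ √(u ⬝ᵥ u) * √((Q *ᵥ (Z *ᵥ u)) ⬝ᵥ (Q *ᵥ (Z *ᵥ u))) := by
        rw [← mulVec_mulVec]; exact dotProduct_le_sqrt_mul_sqrt _ _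
    _ ≤ √((Z *ᵥ u) ⬝ᵥ (Z *ᵥ u)) := by
        rw [hH.dotProduct_self_eigenvectorBasis, Real.sqrt_one, one_mul]
        exact Real.sqrt_le_sqrt (hQ _)
    _ = √(hH.eigenvalues i) := by rw [dotProduct_mulVec_self_eigenvectorBasis]

end Matrix

namespace IsMoorePenroseInv

variable {m n : Type*} [Fintype m] [Fintype n] {X : Matrix m n ℝ} {P : Matrix n m ℝ}

lemma isStarProjection_inv_mul (hP : IsMoorePenroseInv X P) : IsStarProjection (P * X) where
  isIdempotentElem := by rw [IsIdempotentElem, ← Matrix.mul_assoc, hP.2.1]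
  isSelfAdjoint := by
    rw [IsSelfAdjoint, star_eq_conjTranspose, conjTranspose_eq_transpose_of_trivial, hP.2.2.2]

lemma isStarProjection_mul_inv (hP : IsMoorePenroseInv X P) : IsStarProjection (X * P) where
  isIdempotentElem := by rw [IsIdempotentElem, ← Matrix.mul_assoc, hP.1]
  isSelfAdjoint := by
    rw [IsSelfAdjoint, star_eq_conjTranspose, conjTranspose_eq_transpose_of_trivial, hP.2.2.1]

lemma inv_mul_ne_zero (hP : IsMoorePenroseInv X P) (hX : X ≠ 0) : P * X ≠ 0 := by
  intro h
  apply hX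
  rw [← hP.1, Matrix.mul_assoc, h, Matrix.mul_zero]

variable [DecidableEq m] [DecidableEq n]

lemma trace_inv_mul_le_nuclearNorm_add (hP : IsMoorePenroseInv X P) {Z : Matrix n n ℝ}
    {L : Matrix m m ℝ} (hZL : X = X * Z + L * X) :
    (P * X).trace ≤ nuclearNorm Z + nuclearNorm L :=
  calc (P * X).trace = (P * (X * Z + L * X)).trace := by rw [← hZL]
    _ = (P * X * Z).trace + (X * P * L).trace := by
        rw [Matrix.mul_add, trace_add, ← Matrix.mul_assoc, ← Matrix.mul_assoc,
          trace_mul_comm (P * L), ← Matrix.mul_assoc]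
    _ ≤ nuclearNorm Z + nuclearNorm L :=
        add_le_add
          (trace_mul_le_nuclearNorm hP.isStarProjection_inv_mul.dotProduct_mulVec_self_le Z)
          (trace_mul_le_nuclearNorm hP.isStarProjection_mul_inv.dotProduct_mulVec_self_le L)

end IsMoorePenroseInv

/-- If `rank X ≥ 1`, the heuristic LatLRR problem has at least two distinct optimal
solutions; in particular both `(X† X, 0)` and `((1/2) X† X, (1/2) X X†)` are optimal. -/
theorem stmt17 {m n : ℕ} (X : Matrix (Fin m) (Fin n) ℝ) (hX : 1 ≤ X.rank)
    (P : Matrix (Fin n) (Fin m) ℝ) (hP : IsMoorePenroseInv X P) :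
    (X = X * (P * X) + (0 : Matrix (Fin m) (Fin m) ℝ) * X ∧
      ∀ (Z : Matrix (Fin n) (Fin n) ℝ) (L : Matrix (Fin m) (Fin m) ℝ),
        X = X * Z + L * X →
          nuclearNorm (P * X) + nuclearNorm (0 : Matrix (Fin m) (Fin m) ℝ)
            ≤ nuclearNorm Z + nuclearNorm L) ∧
    (X = X * (((1 : ℝ)/2) • (P * X)) + (((1 : ℝ)/2) • (X * P)) * X ∧
      ∀ (Z : Matrix (Fin n) (Fin n) ℝ) (L : Matrix (Fin m) (Fin m) ℝ),
        X = X * Z + L * X →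
          nuclearNorm (((1 : ℝ)/2) • (P * X)) + nuclearNorm (((1 : ℝ)/2) • (X * P))
            ≤ nuclearNorm Z + nuclearNorm L) ∧
    (P * X, (0 : Matrix (Fin m) (Fin m) ℝ)) ≠
      (((1 : ℝ)/2) • (P * X), ((1 : ℝ)/2) • (X * P)) := by
  have hPX := hP.isStarProjection_inv_mul
  have hXP := hP.isStarProjection_mul_inv
  have hX0 : X ≠ 0 := by
    rintro rfl
    simp at hX
  refine ⟨⟨?_, fun Z L hZL => ?_⟩, ⟨?_, fun Z L hZL => ?_⟩, fun h => ?_⟩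
  · rw [← Matrix.mul_assoc, hP.1, Matrix.zero_mul, add_zero]
  · rw [nuclearNorm_of_isStarProjection hPX, nuclearNorm_zero, add_zero]
    exact hP.trace_inv_mul_le_nuclearNorm_add hZL
  · rw [Matrix.mul_smul, Matrix.smul_mul, ← Matrix.mul_assoc, hP.1, ← add_smul]
    norm_num
  · rw [nuclearNorm_smul_of_isStarProjection hPX (by norm_num),
      nuclearNorm_smul_of_isStarProjection hXP (by norm_num), trace_mul_comm X P]
    linarith [hP.trace_inv_mul_le_nuclearNorm_add hZL]
  · have hne := (smul_left_injective ℝ (hP.inv_mul_ne_zero hX0)).ne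
      (show (1 : ℝ) ≠ 1 / 2 by norm_num)
    simp only [one_smul] at hne
    exact hne (congrArg Prod.fst h)
end
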